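/- Let 1 ≤ n' ≤ n, let α = {1,…,n'}, and let M be a matroid on N_n with r_M(N_n) ≥ 2 whose rank function spans an extreme ray of Γ_n. Suppose M has a circuit C = {x, y, z} with x, y ∈ α and z ∉ α, and suppose there exists i ∈ α \ {x, y} that is a loop of M. If a, b > 0 and a·r_M + b·r_{U_{1,α}} is entropic, then a = log v for some integer v ≥ 2. -/

import Mathlib

open Finset

/-- Shannon entropy (natural log) of the random variable `X : Ω → S`
under the probability mass function `p : Ω → ℝ`. -/
noncomputable def Hent {Ω S : Type} [Fintype Ω] [DecidableEq S]
    (p : Ω → ℝ) (X : Ω → S) : ℝ :=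
  ∑ s ∈ Finset.univ.image X,
    Real.negMulLog (∑ ω ∈ Finset.univ.filter (fun ω => X ω = s), p ω)

/-- The joint random variable `(X_i)_{i ∈ A}`. -/
def joint {Ω : Type} {n : ℕ} (X : Fin n → Ω → ℕ) (A : Finset (Fin n)) :
    Ω → (A → ℕ) :=
  fun ω i => X i ω

/-- A set function `h : 2^{N_n} → ℝ` is entropic if it is the entropy function of
some random vector `(X_1, …, X_n)` on a finite probability space. -/
def IsEntropic {n : ℕ} (h : Finset (Fin n) → ℝ) : Prop :=
  ∃ (N : ℕ) (p : Fin N → ℝ) (X : Fin n → Fin N → ℕ),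
    (∀ ω, 0 ≤ p ω) ∧ (∑ ω, p ω) = 1 ∧
    ∀ A : Finset (Fin n), h A = Hent p (joint X A)

/-- The polymatroidal region Γ_n. -/
def PolymatroidRegion (n : ℕ) : Set (Finset (Fin n) → ℝ) :=
  {h | h ∅ = 0 ∧ (∀ A, 0 ≤ h A) ∧ (∀ A B, A ⊆ B → h A ≤ h B) ∧
       (∀ A B, h (A ∩ B) + h (A ∪ B) ≤ h A + h B)}

/-- A nonzero `h ∈ Γ_n` spans an extreme ray of `Γ_n` if whenever `h₁, h₂ ∈ Γ_n` and
`h₁ + h₂` is a nonnegative multiple of `h`, both `h₁` and `h₂` are nonnegative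
multiples of `h`. -/
def SpansExtremeRay {n : ℕ} (h : Finset (Fin n) → ℝ) : Prop :=
  h ∈ PolymatroidRegion n ∧ h ≠ 0 ∧
  ∀ h₁ h₂ : Finset (Fin n) → ℝ, h₁ ∈ PolymatroidRegion n → h₂ ∈ PolymatroidRegion n →
    (∃ c : ℝ, 0 ≤ c ∧ h₁ + h₂ = c • h) →
    (∃ c₁ : ℝ, 0 ≤ c₁ ∧ h₁ = c₁ • h) ∧ (∃ c₂ : ℝ, 0 ≤ c₂ ∧ h₂ = c₂ • h)

/-- `F ⊆ Γ_n` is a face of `Γ_n` if whenever `h₁, h₂ ∈ Γ_n` and `h₁ + h₂ ∈ F`,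
both `h₁` and `h₂` lie in `F`. -/
def IsFace (n : ℕ) (F : Set (Finset (Fin n) → ℝ)) : Prop :=
  F ⊆ PolymatroidRegion n ∧
  ∀ h₁ h₂ : Finset (Fin n) → ℝ, h₁ ∈ PolymatroidRegion n → h₂ ∈ PolymatroidRegion n →
    h₁ + h₂ ∈ F → h₁ ∈ F ∧ h₂ ∈ F

/-- A matroid on ground set `N_n`, given by its rank function. -/
structure MatroidRk (n : ℕ) where
  r : Finset (Fin n) → ℕ
  le_card : ∀ A, r A ≤ A.card
  mono : ∀ ⦃A B : Finset (Fin n)⦄, A ⊆ B → r A ≤ r B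
  submod : ∀ A B : Finset (Fin n), r (A ∩ B) + r (A ∪ B) ≤ r A + r B

/-- The rank function of a matroid, viewed as a real-valued set function. -/
def MatroidRk.rr {n : ℕ} (M : MatroidRk n) : Finset (Fin n) → ℝ :=
  fun A => (M.r A : ℝ)

/-- A set is independent if its rank equals its cardinality. -/
def MatroidRk.Indep {n : ℕ} (M : MatroidRk n) (A : Finset (Fin n)) : Prop :=
  M.r A = A.card

/-- A circuit is a minimal dependent set. -/
def MatroidRk.IsCircuit {n : ℕ} (M : MatroidRk n) (C : Finset (Fin n)) : Prop :=
  ¬ M.Indep C ∧ ∀ A ⊂ C, M.Indep A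

/-- An element is a loop if its rank is zero. -/
def MatroidRk.IsLoop {n : ℕ} (M : MatroidRk n) (e : Fin n) : Prop :=
  M.r {e} = 0

/-- Two distinct elements are parallel if each has rank one and together they have rank one. -/
def MatroidRk.Parallel {n : ℕ} (M : MatroidRk n) (e f : Fin n) : Prop :=
  e ≠ f ∧ M.r {e} = 1 ∧ M.r {f} = 1 ∧ M.r {e, f} = 1

/-- The subset `{1, …, k}` of `N_n` (in `Fin n`, the elements with value `< k`). -/
def alphaSet (n k : ℕ) : Finset (Fin n) :=
  Finset.univ.filter (fun i => (i : ℕ) < k)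

/-- The rank function of the rank-one matroid `U_{1,k}^n`:
`A ↦ 1` if `A ∩ {1, …, k} ≠ ∅` and `0` otherwise. -/
def rUone (n k : ℕ) : Finset (Fin n) → ℝ :=
  fun A => if (A ∩ alphaSet n k).Nonempty then 1 else 0

/-- The rank function of the uniform matroid `U_{n-1,n}`: `A ↦ min (n-1) |A|`. -/
def rUnif (n : ℕ) : Finset (Fin n) → ℝ :=
  fun A => ((min (n - 1) A.card : ℕ) : ℝ)

/-- The p-characteristic set `χ_M` of a matroid `M`. -/
def chi {n : ℕ} (M : MatroidRk n) : Set ℤ :=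
  {v | 2 ≤ v ∧ IsEntropic (fun A => Real.log (v : ℝ) * M.rr A)}

/-!
Write `U, V, C, W` for the variables at `x, y, z, i`. Evaluated on subsets of
`{x, y, z, i}`, the entropic function `a·r_M + b·r_{U_{1,α}}` satisfies Shannon equalities
saying that `W` and `C` are independent, that `U, V, C` are pairwise conditionally independent
given `W`, and that given `W` each of `C` and `V` is a function of the other two together with
`U`. (The equality cases come from Gibbs' inequality against the conditionally independent
coupling.) So on each slice `W = t` the support of `(U, V, C)` is a partial Latin square whose
lines all carry the same mass; with `W ⊥ C` this makes `C` uniform on its support, whence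
`a = H(C) = log |supp C|`, and `a > 0` forces `|supp C| ≥ 2`.
-/

section FiniteProbability

variable {Ω S T : Type} [Fintype Ω] [DecidableEq S] [DecidableEq T] {p : Ω → ℝ}

noncomputable def prob (p : Ω → ℝ) (V : Ω → S) (s : S) : ℝ :=
  ∑ ω ∈ univ.filter (fun ω => V ω = s), p ω

lemma prob_nonneg (hp0 : ∀ ω, 0 ≤ p ω) (V : Ω → S) (s : S) : 0 ≤ prob p V s :=
  sum_nonneg fun ω _ => hp0 ω

lemma prob_pos (hp0 : ∀ ω, 0 ≤ p ω) (V : Ω → S) {ω : Ω} (hω : 0 < p ω) :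
    0 < prob p V (V ω) :=
  hω.trans_le (single_le_sum (fun ω _ => hp0 ω) (by simp))

lemma exists_pos_of_prob_pos {V : Ω → S} {s : S} (h : 0 < prob p V s) :
    ∃ ω, 0 < p ω ∧ V ω = s := by
  by_contra! hc
  refine h.not_ge (sum_nonpos fun ω hω => ?_)
  exact not_lt.mp fun hpos => (hc ω hpos) (mem_filter.mp hω).2

lemma prob_le_prob_of_ae_imp (hp0 : ∀ ω, 0 ≤ p ω) {V : Ω → S} {W : Ω → T}
    {s : S} {t : T}
    (h : ∀ ω, 0 < p ω → V ω = s → W ω = t) : prob p V s ≤ prob p W t := by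
  rw [prob, ← sum_filter_of_ne (p := fun ω => W ω = t) fun ω hω hne =>
    h ω ((hp0 ω).lt_of_ne' hne) (mem_filter.mp hω).2, filter_filter]
  exact sum_le_sum_of_subset_of_nonneg (fun ω hω => by simp_all) fun ω _ _ => hp0 ω

lemma prob_eq_prob_of_ae_iff (hp0 : ∀ ω, 0 ≤ p ω) {V : Ω → S} {W : Ω → T}
    {s : S} {t : T}
    (h : ∀ ω, 0 < p ω → (V ω = s ↔ W ω = t)) : prob p V s = prob p W t :=
  le_antisymm (prob_le_prob_of_ae_imp hp0 fun ω hω => (h ω hω).1)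
    (prob_le_prob_of_ae_imp hp0 fun ω hω => (h ω hω).2)

lemma sum_mul_comp_eq_sum_prob (V : Ω → S) {R : Finset S} (hR : ∀ ω, V ω ∈ R)
    (f : S → ℝ) :
    ∑ ω, p ω * f (V ω) = ∑ s ∈ R, prob p V s * f s := by
  rw [← sum_fiberwise_of_maps_to (fun ω _ => hR ω)]
  refine sum_congr rfl fun s _ => ?_
  rw [prob, sum_mul]
  exact sum_congr rfl fun ω hω => by rw [(mem_filter.mp hω).2]

lemma sum_prob_eq_one (hp1 : ∑ ω, p ω = 1) (V : Ω → S) {R : Finset S}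
    (hR : ∀ ω, V ω ∈ R) :
    ∑ s ∈ R, prob p V s = 1 := by
  simpa [hp1] using (sum_mul_comp_eq_sum_prob (p := p) V hR fun _ => (1 : ℝ)).symm

lemma sum_prob_pair_eq_prob (W : Ω → S) (U : Ω → T) {R : Finset T} (hR : ∀ ω, U ω ∈ R)
    (w : S) : ∑ u ∈ R, prob p (fun ω => (W ω, U ω)) (w, u) = prob p W w := by
  rw [prob, ← sum_fiberwise_of_maps_to (fun ω _ => hR ω)]
  refine sum_congr rfl fun u _ => ?_
  rw [prob, filter_filter]
  simp only [Prod.mk.injEq]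

lemma Hent_eq_sum (V : Ω → S) : Hent p V = ∑ ω, p ω * -Real.log (prob p V (V ω)) := by
  rw [sum_mul_comp_eq_sum_prob V (R := univ.image V) (by simp) fun s => -Real.log (prob p V s)]
  exact sum_congr rfl fun s _ => by simp only [Real.negMulLog, prob]; ring

lemma Hent_congr {V : Ω → S} {W : Ω → T} (h : ∀ ω ω', V ω' = V ω ↔ W ω' = W ω) :
    Hent p V = Hent p W := by
  simp only [Hent_eq_sum, prob, h]

end FiniteProbability

lemma eq_of_sum_mul_log_div_nonpos {ι : Type} {R : Finset ι} {q r : ι → ℝ}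
    (hq0 : ∀ j ∈ R, 0 ≤ q j) (hr0 : ∀ j ∈ R, 0 ≤ r j) (hq1 : ∑ j ∈ R, q j = 1)
    (hr1 : ∑ j ∈ R, r j ≤ 1) (hpos : ∀ j ∈ R, 0 < q j → 0 < r j)
    (h : ∑ j ∈ R, q j * Real.log (q j / r j) ≤ 0) : ∀ j ∈ R, q j = r j := by
  have hlog : ∀ j, Real.log (q j / r j) = -Real.log (r j / q j) := fun j => by
    rw [← Real.log_inv, inv_div]
  have hterm : ∀ j ∈ R, q j - r j ≤ q j * Real.log (q j / r j) := by
    intro j hj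
    rcases (hq0 j hj).eq_or_lt with hq | hq
    · simp [← hq, hr0 j hj]
    · have hle := Real.log_le_sub_one_of_pos (div_pos (hpos j hj hq) hq)
      have hmul : q j * (r j / q j) = r j := mul_div_cancel₀ _ hq.ne'
      rw [hlog]
      nlinarith
  have hsum : ∑ j ∈ R, (q j - r j) = ∑ j ∈ R, q j * Real.log (q j / r j) := by
    refine le_antisymm (sum_le_sum hterm) (h.trans ?_)
    rw [sum_sub_distrib, hq1]
    linarith
  intro j hj
  have heq := (sum_eq_sum_iff_of_le hterm).mp hsum j hj
  rcases (hq0 j hj).eq_or_lt with hq | hq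
  · simpa [← hq, eq_comm] using heq
  · have hr := hpos j hj hq
    by_contra hne
    have hlt := Real.log_lt_sub_one_of_pos (div_pos hr hq)
      fun h => hne ((div_eq_one_iff_eq hq.ne').mp h).symm
    have hmul : q j * (r j / q j) = r j := mul_div_cancel₀ _ hq.ne'
    rw [hlog] at heq
    nlinarith

section InformationIdentities

variable {Ω S T K : Type} [Fintype Ω] [DecidableEq S] [DecidableEq T] [DecidableEq K]
  {p : Ω → ℝ}

def Determines (p : Ω → ℝ) (U : Ω → S) (V : Ω → T) : Prop :=
  ∀ ω ω', 0 < p ω → 0 < p ω' → U ω' = U ω → V ω' = V ω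

def CondIndep (p : Ω → ℝ) (U : Ω → S) (V : Ω → T) (W : Ω → K) : Prop :=
  ∀ u v w, prob p (fun ω => (W ω, U ω)) (w, u) * prob p (fun ω => (W ω, V ω)) (w, v)
    = prob p (fun ω => (W ω, U ω, V ω)) (w, u, v) * prob p W w

def Indep (p : Ω → ℝ) (U : Ω → S) (V : Ω → T) : Prop :=
  ∀ u v, prob p (fun ω => (U ω, V ω)) (u, v) = prob p U u * prob p V v

lemma prob_pair_eq_prob_of_Hent_pair_eq (hp0 : ∀ ω, 0 ≤ p ω) {U : Ω → S} {V : Ω → T}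
    (h : Hent p (fun ω => (U ω, V ω)) = Hent p U) {ω : Ω} (hω : 0 < p ω) :
    prob p (fun ω => (U ω, V ω)) (U ω, V ω) = prob p U (U ω) := by
  have hterm : ∀ ω ∈ univ, p ω * -Real.log (prob p U (U ω))
      ≤ p ω * -Real.log (prob p (fun ω => (U ω, V ω)) (U ω, V ω)) := by
    intro ω _
    rcases (hp0 ω).eq_or_lt with h0 | hpos
    · simp [← h0]
    · refine mul_le_mul_of_nonneg_left (neg_le_neg (Real.log_le_log (prob_pos hp0 _ hpos) ?_))
        hpos.le
      exact prob_le_prob_of_ae_imp hp0 fun ω' _ h => congrArg Prod.fst h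
  have hsum := (sum_eq_sum_iff_of_le hterm).mp (by
    rw [← Hent_eq_sum U, ← Hent_eq_sum (fun ω => (U ω, V ω)), h]) ω (mem_univ ω)
  exact Real.log_injOn_pos (prob_pos hp0 _ hω) (prob_pos hp0 U hω)
    (by linarith [mul_left_cancel₀ hω.ne' hsum])

lemma determines_of_Hent_pair_eq (hp0 : ∀ ω, 0 ≤ p ω) {U : Ω → S} {V : Ω → T}
    (h : Hent p (fun ω => (U ω, V ω)) = Hent p U) : Determines p U V := by
  classical
  intro ω ω' hω hω' hU
  by_contra hV
  have hsplit : p ω' + prob p (fun ω => (U ω, V ω)) (U ω, V ω) ≤ prob p U (U ω) := by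
    rw [prob, prob, ← sum_insert (by simp [hV])]
    refine sum_le_sum_of_subset_of_nonneg (insert_subset (by simp [hU]) ?_) fun ω _ _ => hp0 ω
    exact fun ω'' h => by simp_all
  linarith [prob_pair_eq_prob_of_Hent_pair_eq hp0 h hω]

end InformationIdentities

section CondIndepOfEntropy

variable {Ω S T K : Type} [Fintype Ω] [DecidableEq S] [DecidableEq T] [DecidableEq K]
  {p : Ω → ℝ}

/-- The law of `(W, U, V)` that makes `U` and `V` conditionally independent given `W`,
with the same pair marginals `(W, U)` and `(W, V)` as the original one. -/
noncomputable def condIndepCoupling (p : Ω → ℝ) (U : Ω → S) (V : Ω → T) (W : Ω → K)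
    (s : K × S × T) : ℝ :=
  prob p (fun ω => (W ω, U ω)) (s.1, s.2.1) * prob p (fun ω => (W ω, V ω)) (s.1, s.2.2)
    / prob p W s.1

lemma sum_condIndepCoupling (hp1 : ∑ ω, p ω = 1) (U : Ω → S) (V : Ω → T) (W : Ω → K) :
    ∑ s ∈ univ.image W ×ˢ univ.image U ×ˢ univ.image V,
      condIndepCoupling p U V W s = 1 := by
  calc ∑ s ∈ univ.image W ×ˢ univ.image U ×ˢ univ.image V, condIndepCoupling p U V W s
      = ∑ w ∈ univ.image W, (∑ u ∈ univ.image U, prob p (fun ω => (W ω, U ω)) (w, u))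
          * (∑ v ∈ univ.image V, prob p (fun ω => (W ω, V ω)) (w, v)) / prob p W w := by
        simp only [sum_product, sum_mul_sum, sum_div, condIndepCoupling]
    _ = ∑ w ∈ univ.image W, prob p W w := by
        simp only [sum_prob_pair_eq_prob W U (R := univ.image U) (by simp),
          sum_prob_pair_eq_prob W V (R := univ.image V) (by simp), mul_self_div_self]
    _ = 1 := sum_prob_eq_one hp1 W (by simp)

lemma sum_prob_mul_log_div_condIndepCoupling (hp0 : ∀ ω, 0 ≤ p ω) (U : Ω → S)
    (V : Ω → T) (W : Ω → K) :
    ∑ s ∈ univ.image W ×ˢ univ.image U ×ˢ univ.image V,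
        prob p (fun ω => (W ω, U ω, V ω)) s
          * Real.log (prob p (fun ω => (W ω, U ω, V ω)) s / condIndepCoupling p U V W s)
      = Hent p (fun ω => (W ω, U ω)) + Hent p (fun ω => (W ω, V ω))
          - Hent p (fun ω => (W ω, U ω, V ω)) - Hent p W := by
  rw [← sum_mul_comp_eq_sum_prob _ (by simp), Hent_eq_sum, Hent_eq_sum, Hent_eq_sum,
    Hent_eq_sum, ← sum_add_distrib, ← sum_sub_distrib, ← sum_sub_distrib]
  refine sum_congr rfl fun ω _ => ?_
  rcases (hp0 ω).eq_or_lt with h0 | hω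
  · simp [← h0]
  have hWU := prob_pos hp0 (fun ω => (W ω, U ω)) hω
  have hWV := prob_pos hp0 (fun ω => (W ω, V ω)) hω
  have hWUV := prob_pos hp0 (fun ω => (W ω, U ω, V ω)) hω
  have hW := prob_pos hp0 W hω
  simp only [condIndepCoupling]
  rw [Real.log_div hWUV.ne' (by positivity), Real.log_div (by positivity) hW.ne',
    Real.log_mul hWU.ne' hWV.ne']
  ring

lemma prob_eq_condIndepCoupling_of_Hent_eq (hp0 : ∀ ω, 0 ≤ p ω) (hp1 : ∑ ω, p ω = 1)
    {U : Ω → S} {V : Ω → T} {W : Ω → K}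
    (h : Hent p (fun ω => (W ω, U ω)) + Hent p (fun ω => (W ω, V ω))
      = Hent p (fun ω => (W ω, U ω, V ω)) + Hent p W) :
    ∀ s ∈ univ.image W ×ˢ univ.image U ×ˢ univ.image V,
      prob p (fun ω => (W ω, U ω, V ω)) s = condIndepCoupling p U V W s := by
  refine eq_of_sum_mul_log_div_nonpos (fun s _ => prob_nonneg hp0 _ s)
    (fun s _ => div_nonneg (mul_nonneg (prob_nonneg hp0 _ _) (prob_nonneg hp0 _ _))
      (prob_nonneg hp0 _ _))
    (sum_prob_eq_one hp1 _ (by simp)) (sum_condIndepCoupling hp1 U V W).le ?_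
    (by rw [sum_prob_mul_log_div_condIndepCoupling hp0]; linarith)
  intro s _ hs
  obtain ⟨ω, hω, rfl⟩ := exists_pos_of_prob_pos hs
  have := prob_pos hp0 (fun ω => (W ω, U ω)) hω
  have := prob_pos hp0 (fun ω => (W ω, V ω)) hω
  have := prob_pos hp0 W hω
  simp only [condIndepCoupling]
  positivity

lemma condIndep_of_Hent_eq (hp0 : ∀ ω, 0 ≤ p ω) (hp1 : ∑ ω, p ω = 1)
    {U : Ω → S} {V : Ω → T} {W : Ω → K}
    (h : Hent p (fun ω => (W ω, U ω)) + Hent p (fun ω => (W ω, V ω))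
      = Hent p (fun ω => (W ω, U ω, V ω)) + Hent p W) :
    CondIndep p U V W := by
  intro u v w
  have hWU :
      prob p (fun ω => (W ω, U ω, V ω)) (w, u, v) ≤ prob p (fun ω => (W ω, U ω)) (w, u) :=
    prob_le_prob_of_ae_imp hp0 fun ω _ h => by simp_all
  have hWV :
      prob p (fun ω => (W ω, U ω, V ω)) (w, u, v) ≤ prob p (fun ω => (W ω, V ω)) (w, v) :=
    prob_le_prob_of_ae_imp hp0 fun ω _ h => by simp_all
  by_cases hpos :
      0 < prob p (fun ω => (W ω, U ω)) (w, u) ∧ 0 < prob p (fun ω => (W ω, V ω)) (w, v)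
  · obtain ⟨ω, -, hωu⟩ := exists_pos_of_prob_pos hpos.1
    obtain ⟨ω', -, hω'v⟩ := exists_pos_of_prob_pos hpos.2
    have hW : 0 < prob p W w :=
      hpos.1.trans_le (prob_le_prob_of_ae_imp hp0 fun ω _ h => congrArg Prod.fst h)
    simp only [Prod.mk.injEq] at hωu hω'v
    rw [prob_eq_condIndepCoupling_of_Hent_eq hp0 hp1 h _
      (by simp only [mem_product, mem_image, mem_univ, true_and]
          exact ⟨⟨ω, hωu.1⟩, ⟨ω, hωu.2⟩, ⟨ω', hω'v.2⟩⟩)]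
    simp only [condIndepCoupling]
    field_simp
  · rcases not_and_or.mp hpos with h0 | h0
    · have h0 := le_antisymm (not_lt.mp h0) (prob_nonneg hp0 _ _)
      rw [h0, le_antisymm (hWU.trans h0.le) (prob_nonneg hp0 _ _), zero_mul, zero_mul]
    · have h0 := le_antisymm (not_lt.mp h0) (prob_nonneg hp0 _ _)
      rw [h0, le_antisymm (hWV.trans h0.le) (prob_nonneg hp0 _ _), mul_zero, zero_mul]

lemma indep_of_Hent_eq (hp0 : ∀ ω, 0 ≤ p ω) (hp1 : ∑ ω, p ω = 1)
    {U : Ω → S} {V : Ω → T}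
    (h : Hent p (fun ω => (U ω, V ω)) = Hent p U + Hent p V) : Indep p U V := by
  have hconst : prob p (fun _ => ()) () = 1 := by simp [prob, hp1]
  have hU : Hent p (fun ω => ((), U ω)) = Hent p U := Hent_congr (by simp)
  have hV : Hent p (fun ω => ((), V ω)) = Hent p V := Hent_congr (by simp)
  have hUV : Hent p (fun ω => ((), U ω, V ω)) = Hent p (fun ω => (U ω, V ω)) :=
    Hent_congr (by simp)
  have h0 : Hent p (fun _ => ()) = 0 := by simp [Hent_eq_sum, hconst]
  have hind := condIndep_of_Hent_eq hp0 hp1 (W := fun _ => ()) (U := U) (V := V) (by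
    rw [hU, hV, hUV, h, h0]
    ring)
  intro u v
  have := (hind u v ()).symm
  simp only [hconst, mul_one] at this
  simpa [prob] using this

end CondIndepOfEntropy

section LatinSquare

variable {Ω S T K L : Type} [Fintype Ω] [DecidableEq S] [DecidableEq T] [DecidableEq K]
  [DecidableEq L] {p : Ω → ℝ} {U : Ω → S} {V : Ω → T} {C : Ω → L} {W : Ω → K}

lemma prob_pair_eq_of_determines_of_condIndep (hp0 : ∀ ω, 0 ≤ p ω)
    (hC : Determines p (fun ω => (W ω, U ω, V ω)) C)
    (hV : Determines p (fun ω => (W ω, U ω, C ω)) V)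
    (hUV : CondIndep p U V W) (hUC : CondIndep p U C W) {ω₁ : Ω} (h₁ : 0 < p ω₁) :
    prob p (fun ω => (W ω, C ω)) (W ω₁, C ω₁)
      = prob p (fun ω => (W ω, V ω)) (W ω₁, V ω₁) := by
  have hevent : prob p (fun ω => (W ω, U ω, C ω)) (W ω₁, U ω₁, C ω₁)
      = prob p (fun ω => (W ω, U ω, V ω)) (W ω₁, U ω₁, V ω₁) := by
    refine prob_eq_prob_of_ae_iff hp0 fun ω hω => ⟨fun h => ?_, fun h => ?_⟩
    · have hVω := hV ω₁ ω h₁ hω h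
      simp only [Prod.mk.injEq] at h ⊢
      exact ⟨h.1, h.2.1, hVω⟩
    · have hCω := hC ω₁ ω h₁ hω h
      simp only [Prod.mk.injEq] at h ⊢
      exact ⟨h.1, h.2.1, hCω⟩
  refine mul_left_cancel₀ (prob_pos hp0 (fun ω => (W ω, U ω)) h₁).ne' ?_
  rw [hUC, hUV, hevent]

lemma prob_eq_prob_of_latinSquare (hp0 : ∀ ω, 0 ≤ p ω)
    (hC : Determines p (fun ω => (W ω, U ω, V ω)) C)
    (hV : Determines p (fun ω => (W ω, U ω, C ω)) V)
    (hUV : CondIndep p U V W) (hUC : CondIndep p U C W) (hVC : CondIndep p V C W)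
    (hWC : Indep p W C) {s s' : L} (hs : 0 < prob p C s) (hs' : 0 < prob p C s') :
    prob p C s = prob p C s' := by
  obtain ⟨ω₀, h₀, -⟩ := exists_pos_of_prob_pos hs
  have ht := prob_pos hp0 W h₀
  have hWC_pos : ∀ s, 0 < prob p C s → 0 < prob p (fun ω => (W ω, C ω)) (W ω₀, s) :=
    fun s hs => by rw [hWC]; positivity
  suffices prob p (fun ω => (W ω, C ω)) (W ω₀, s)
      = prob p (fun ω => (W ω, C ω)) (W ω₀, s') by
    rw [hWC, hWC] at this
    exact mul_left_cancel₀ ht.ne' this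
  obtain ⟨ω₁, h₁, hω₁⟩ := exists_pos_of_prob_pos (hWC_pos s hs)
  have k₁ := prob_pair_eq_of_determines_of_condIndep hp0 hC hV hUV hUC h₁
  simp only [Prod.mk.injEq] at hω₁
  rw [hω₁.1, hω₁.2] at k₁
  have hVC_pos : 0 < prob p (fun ω => (W ω, V ω, C ω)) (W ω₀, V ω₁, s') := by
    have h := hVC (V ω₁) s' (W ω₀)
    rw [← k₁] at h
    exact (mul_pos_iff_of_pos_right ht).mp (h ▸ mul_pos (hWC_pos s hs) (hWC_pos s' hs'))
  obtain ⟨ω₃, h₃, hω₃⟩ := exists_pos_of_prob_pos hVC_pos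
  have k₃ := prob_pair_eq_of_determines_of_condIndep hp0 hC hV hUV hUC h₃
  simp only [Prod.mk.injEq] at hω₃
  rw [hω₃.1, hω₃.2.1, hω₃.2.2] at k₃
  rw [k₁, k₃]

end LatinSquare

lemma exists_Hent_eq_log_natCast {Ω S : Type} [Fintype Ω] [DecidableEq S] {p : Ω → ℝ}
    (hp0 : ∀ ω, 0 ≤ p ω) (hp1 : ∑ ω, p ω = 1) {C : Ω → S}
    (hC : ∀ s s', 0 < prob p C s → 0 < prob p C s' → prob p C s = prob p C s') :
    ∃ v : ℕ, Hent p C = Real.log v := by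
  obtain ⟨ω₀, h₀⟩ : ∃ ω, 0 < p ω := by
    by_contra! h
    linarith [sum_nonpos fun ω (_ : ω ∈ univ) => h ω]
  have hc := prob_pos hp0 C h₀
  set supp := (univ.image C).filter fun s => 0 < prob p C s
  have hcard : (supp.card : ℝ) * prob p C (C ω₀) = 1 := by
    rw [← sum_prob_eq_one hp1 C (R := univ.image C) (by simp),
      ← sum_filter_of_ne fun s _ hne => (prob_nonneg hp0 C s).lt_of_ne' hne, ← nsmul_eq_mul,
      ← sum_const]
    exact sum_congr rfl fun s hs => hC _ _ hc (mem_filter.mp hs).2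
  have hH : Hent p C = -Real.log (prob p C (C ω₀)) := by
    rw [Hent_eq_sum, ← one_mul (-Real.log _), ← hp1, sum_mul]
    refine sum_congr rfl fun ω _ => ?_
    rcases (hp0 ω).eq_or_lt with h0 | hω
    · simp [← h0]
    · rw [hC _ _ (prob_pos hp0 C hω) hc]
  refine ⟨supp.card, ?_⟩
  rw [hH, eq_inv_of_mul_eq_one_right hcard, Real.log_inv, neg_neg]

lemma Hent_eq_Hent_joint {Ω S : Type} [Fintype Ω] [DecidableEq S] {p : Ω → ℝ} {n : ℕ}
    {X : Fin n → Ω → ℕ} {V : Ω → S} (A : Finset (Fin n))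
    (hV : ∀ ω ω', V ω' = V ω ↔ ∀ j ∈ A, X j ω' = X j ω) :
    Hent p V = Hent p (joint X A) :=
  Hent_congr fun ω ω' => by simp [hV, joint, funext_iff]

namespace MatroidRk

variable {n : ℕ} (M : MatroidRk n)

lemma r_empty : M.r ∅ = 0 :=
  Nat.le_zero.mp (by simpa using M.le_card ∅)

lemma r_insert_of_isLoop {i : Fin n} (hi : M.IsLoop i) (A : Finset (Fin n)) :
    M.r (insert i A) = M.r A := by
  by_cases hiA : i ∈ A
  · rw [insert_eq_of_mem hiA]
  have hsub := M.submod {i} A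
  rw [singleton_inter_of_notMem hiA, ← insert_eq, M.r_empty, hi] at hsub
  have hmono := M.mono (subset_insert i A)
  omega

variable {M}

lemma IsCircuit.r_eq_card_of_notMem {C A : Finset (Fin n)} (hC : M.IsCircuit C) (hAC : A ⊆ C)
    {e : Fin n} (he : e ∈ C) (heA : e ∉ A) : M.r A = A.card :=
  hC.2 A ((ssubset_iff_of_subset hAC).mpr ⟨e, he, heA⟩)

lemma IsCircuit.r_add_one {C : Finset (Fin n)} (hC : M.IsCircuit C) {e : Fin n} (he : e ∈ C) :
    M.r C + 1 = C.card := by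
  have herase := hC.r_eq_card_of_notMem (erase_subset e C) he (notMem_erase e C)
  have hmono := M.mono (erase_subset e C)
  have hle := M.le_card C
  have hne : M.r C ≠ C.card := hC.1
  rw [card_erase_of_mem he] at herase
  omega

end MatroidRk

structure LatinSquareIdentities {n : ℕ} (h : Finset (Fin n) → ℝ) (x y z i : Fin n) :
    Prop where
  determines_z : h {i, x, y, z} = h {i, x, y}
  determines_y : h {i, x, y, z} = h {i, x, z}
  condIndep_xy : h {i, x} + h {i, y} = h {i, x, y} + h {i}
  condIndep_xz : h {i, x} + h {i, z} = h {i, x, z} + h {i}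
  condIndep_yz : h {i, y} + h {i, z} = h {i, y, z} + h {i}
  indep_iz : h {i, z} = h {i} + h {z}

lemma LatinSquareIdentities.prob_eq {Ω : Type} [Fintype Ω] {p : Ω → ℝ}
    (hp0 : ∀ ω, 0 ≤ p ω) (hp1 : ∑ ω, p ω = 1) {n : ℕ} {X : Fin n → Ω → ℕ}
    {x y z i : Fin n}
    (hid : LatinSquareIdentities (fun A => Hent p (joint X A)) x y z i) {s s' : ℕ}
    (hs : 0 < prob p (X z) s) (hs' : 0 < prob p (X z) s') : prob p (X z) s = prob p (X z) s' := by
  refine prob_eq_prob_of_latinSquare hp0 (U := X x) (V := X y) (W := X i)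
    (determines_of_Hent_pair_eq hp0 ?_) (determines_of_Hent_pair_eq hp0 ?_)
    (condIndep_of_Hent_eq hp0 hp1 ?_) (condIndep_of_Hent_eq hp0 hp1 ?_)
    (condIndep_of_Hent_eq hp0 hp1 ?_) (indep_of_Hent_eq hp0 hp1 ?_) hs hs'
  · convert hid.determines_z using 1 <;> refine Hent_eq_Hent_joint _ fun ω ω' => ?_ <;>
      simp [and_assoc]
  · convert hid.determines_y using 1 <;> refine Hent_eq_Hent_joint _ fun ω ω' => ?_
    · simp only [Prod.mk.injEq, mem_insert, mem_singleton, forall_eq_or_imp, forall_eq]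
      tauto
    · simp
  · convert hid.condIndep_xy using 2 <;> refine Hent_eq_Hent_joint _ fun ω ω' => ?_ <;> simp
  · convert hid.condIndep_xz using 2 <;> refine Hent_eq_Hent_joint _ fun ω ω' => ?_ <;> simp
  · convert hid.condIndep_yz using 2 <;> refine Hent_eq_Hent_joint _ fun ω ω' => ?_ <;> simp
  · convert hid.indep_iz using 1
    · exact Hent_eq_Hent_joint _ fun ω ω' => by simp
    · congr 1 <;> exact Hent_eq_Hent_joint _ fun ω ω' => by simp

lemma rUone_of_mem {n k : ℕ} {A : Finset (Fin n)} {i : Fin n} (hiA : i ∈ A)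
    (hi : i ∈ alphaSet n k) : rUone n k A = 1 :=
  if_pos ⟨i, mem_inter.mpr ⟨hiA, hi⟩⟩

lemma rUone_singleton_of_notMem {n k : ℕ} {z : Fin n} (hz : z ∉ alphaSet n k) :
    rUone n k {z} = 0 :=
  if_neg fun ⟨w, hw⟩ => hz (by
    obtain ⟨hwz, hw⟩ := mem_inter.mp hw
    rwa [mem_singleton.mp hwz] at hw)

lemma mul_rr_add_mul_rUone_singleton_eq {n n' : ℕ} {M : MatroidRk n} {x y z : Fin n}
    (a b : ℝ) (hx : x ∈ alphaSet n n') (hz : z ∉ alphaSet n n') (hC : M.IsCircuit {x, y, z}) :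
    a * M.rr {z} + b * rUone n n' {z} = a := by
  rw [MatroidRk.rr, hC.r_eq_card_of_notMem (by simp) (mem_insert_self x _)
      (by simpa using ne_of_mem_of_not_mem hx hz), rUone_singleton_of_notMem hz]
  simp

lemma LatinSquareIdentities.of_isCircuit_of_isLoop {n n' : ℕ} {M : MatroidRk n}
    {x y z i : Fin n} (a b : ℝ) (hxy : x ≠ y) (hx : x ∈ alphaSet n n')
    (hy : y ∈ alphaSet n n') (hz : z ∉ alphaSet n n') (hC : M.IsCircuit {x, y, z})
    (hiα : i ∈ alphaSet n n') (hloop : M.IsLoop i) :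
    LatinSquareIdentities (fun A => a * M.rr A + b * rUone n n' A) x y z i := by
  have hxz : x ≠ z := ne_of_mem_of_not_mem hx hz
  have hyz : y ≠ z := ne_of_mem_of_not_mem hy hz
  have hf : ∀ S, a * M.rr (insert i S) + b * rUone n n' (insert i S) = a * M.r S + b :=
    fun S => by
      rw [MatroidRk.rr, M.r_insert_of_isLoop hloop, rUone_of_mem (mem_insert_self i S) hiα,
        mul_one]
  have hfi : a * M.rr {i} + b * rUone n n' {i} = b := by
    rw [MatroidRk.rr, hloop, rUone_of_mem (mem_singleton_self i) hiα]
    simp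
  have hrx : M.r {x} = 1 :=
    hC.r_eq_card_of_notMem (e := z) (by simp) (by simp) (by simpa using hxz.symm)
  have hry : M.r {y} = 1 :=
    hC.r_eq_card_of_notMem (e := z) (by simp) (by simp) (by simpa using hyz.symm)
  have hrz : M.r {z} = 1 :=
    hC.r_eq_card_of_notMem (e := x) (by simp) (by simp) (by simpa using hxz)
  have hrxy : M.r {x, y} = 2 := (hC.r_eq_card_of_notMem (e := z) (by simp [subset_iff])
    (by simp) (by simp [hxz.symm, hyz.symm])).trans (card_pair hxy)
  have hrxz : M.r {x, z} = 2 := (hC.r_eq_card_of_notMem (e := y) (by simp [subset_iff])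
    (by simp) (by simp [hxy.symm, hyz])).trans (card_pair hxz)
  have hryz : M.r {y, z} = 2 := (hC.r_eq_card_of_notMem (e := x) (by simp [subset_iff])
    (by simp) (by simp [hxy, hxz])).trans (card_pair hyz)
  have hrxyz : M.r {x, y, z} = 2 := by
    have h := hC.r_add_one (mem_insert_self x _)
    rw [card_insert_of_notMem (by simp [hxy, hxz]), card_pair hyz] at h
    omega
  constructor <;>
    simp only [hf, hfi, mul_rr_add_mul_rUone_singleton_eq a b hx hz hC, hrx, hry, hrz, hrxy,
      hrxz, hryz, hrxyz] <;>
    push_cast <;> ring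

theorem stmt17_general (n n' : ℕ)
    (M : MatroidRk n)
    (x y z : Fin n) (hxy : x ≠ y)
    (hx : x ∈ alphaSet n n') (hy : y ∈ alphaSet n n') (hz : z ∉ alphaSet n n')
    (hC : M.IsCircuit {x, y, z})
    (i : Fin n) (hiα : i ∈ alphaSet n n')
    (hloop : M.IsLoop i)
    (a b : ℝ) (ha : 0 < a)
    (hent : IsEntropic (fun A => a * M.rr A + b * rUone n n' A)) :
    ∃ v : ℤ, 2 ≤ v ∧ a = Real.log (v : ℝ) := by
  obtain ⟨N, p, X, hp0, hp1, hX⟩ := hent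
  have hid := LatinSquareIdentities.of_isCircuit_of_isLoop a b hxy hx hy hz hC hiα hloop
  rw [show (fun A => a * M.rr A + b * rUone n n' A) = fun A => Hent p (joint X A) from
    funext hX] at hid
  obtain ⟨v, hv⟩ := exists_Hent_eq_log_natCast hp0 hp1 fun _ _ => hid.prob_eq hp0 hp1
  have haz : a = Real.log v := by
    rw [← hv, Hent_eq_Hent_joint (X := X) {z} (by simp), ← hX]
    exact (mul_rr_add_mul_rUone_singleton_eq a b hx hz hC).symm
  have hv2 : 2 ≤ v := by
    by_contra! hv2
    have hv1 : (v : ℝ) ≤ 1 := by exact_mod_cast Nat.le_of_lt_succ hv2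
    linarith [Real.log_nonpos (Nat.cast_nonneg v) hv1]
  exact ⟨v, by exact_mod_cast hv2, by rw [haz, Int.cast_natCast]⟩

/-- for `M` of rank `≥ 2` spanning an extreme ray of `Γ_n` with a circuit
`{x, y, z}` where `x, y ∈ α = {1,…,n'}`, `z ∉ α`, and a loop `i ∈ α \ {x, y}`, if
`a·r_M + b·r_{U_{1,α}}` is entropic with `a, b > 0`, then `a = log v` for some integer
`v ≥ 2`. -/
theorem stmt17 (n n' : ℕ) (hn'1 : 1 ≤ n') (hn'n : n' ≤ n)
    (M : MatroidRk n) (hrk : 2 ≤ M.r Finset.univ) (hext : SpansExtremeRay M.rr)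
    (x y z : Fin n) (hxy : x ≠ y)
    (hx : x ∈ alphaSet n n') (hy : y ∈ alphaSet n n') (hz : z ∉ alphaSet n n')
    (hC : M.IsCircuit {x, y, z})
    (i : Fin n) (hiα : i ∈ alphaSet n n') (hix : i ≠ x) (hiy : i ≠ y)
    (hloop : M.IsLoop i)
    (a b : ℝ) (ha : 0 < a) (hb : 0 < b)
    (hent : IsEntropic (fun A => a * M.rr A + b * rUone n n' A)) :
    ∃ v : ℤ, 2 ≤ v ∧ a = Real.log (v : ℝ) :=
  stmt17_general n n' M x y z hxy hx hy hz hC i hiα hloop a b ha hent
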